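/- arXiv:1312.1205 — 2 statements merged into one kernel-verified Lean document; each statement's English description precedes it below -/
import Mathlib

section
/- For every finite simple graph H on t ≥ 1 vertices and every finite nonempty simple graph G, one has i(H) ≤ R(H,G) ≤ I(H). -/
open Filter Topology SimpleGraph

namespace IndPaper

/-- The pullback of `G : SimpleGraph V` along a map `f : Fin t → V`:
distinct `i, j` are adjacent iff `f i` and `f j` are adjacent in `G`. -/
def pull {V : Type*} {t : ℕ} (G : SimpleGraph V) (f : Fin t → V) : SimpleGraph (Fin t) where
  Adj i j := G.Adj (f i) (f j)
  symm := ⟨fun i j h => G.symm.symm _ _ h⟩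
  loopless := ⟨fun i h => G.loopless.irrefl _ h⟩

/-- `r(H,G)`: the labeled density with repetitions of the labeled graph `H` in `G`. -/
noncomputable def labDensity {V : Type*} [Fintype V] {t : ℕ}
    (H : SimpleGraph (Fin t)) (G : SimpleGraph V) : ℝ :=
  (Nat.card {f : Fin t → V // pull G f = H} : ℝ) / (Fintype.card V : ℝ) ^ t

/-- `R(H,G)`: the density with repetitions of the isomorphism type of `H` in `G`. -/
noncomputable def repDensity {V : Type*} [Fintype V] {t : ℕ}
    (H : SimpleGraph (Fin t)) (G : SimpleGraph V) : ℝ :=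
  (Nat.card {f : Fin t → V // Nonempty (pull G f ≃g H)} : ℝ) / (Fintype.card V : ℝ) ^ t

/-- `p(H,G)`: the labeled density without repetitions (injective samples). -/
noncomputable def injDensity {V : Type*} [Fintype V] {t : ℕ}
    (H : SimpleGraph (Fin t)) (G : SimpleGraph V) : ℝ :=
  (Nat.card {f : Fin t → V // Function.Injective f ∧ pull G f = H} : ℝ) /
    ((Fintype.card V).descFactorial t : ℝ)

/-- `P(H,G)`: the number of `t`-subsets of `V(G)` inducing a copy of `H`, over `C(n,t)`. -/
noncomputable def subsetDensity {V : Type*} [Fintype V] {t : ℕ}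
    (H : SimpleGraph (Fin t)) (G : SimpleGraph V) : ℝ :=
  (Nat.card {s : Finset V // s.card = t ∧ Nonempty (G.induce (↑s : Set V) ≃g H)} : ℝ) /
    ((Fintype.card V).choose t : ℝ)

/-- `max_{|G|=n} P(H,G)`. -/
noncomputable def maxDensity {t : ℕ} (H : SimpleGraph (Fin t)) (n : ℕ) : ℝ :=
  sSup {x : ℝ | ∃ G : SimpleGraph (Fin n), x = subsetDensity H G}

/-- `min_{|G|=n} P(H,G)`. -/
noncomputable def minDensity {t : ℕ} (H : SimpleGraph (Fin t)) (n : ℕ) : ℝ :=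
  sInf {x : ℝ | ∃ G : SimpleGraph (Fin n), x = subsetDensity H G}

/-- The inducibility `I(H) = lim_n max_{|G|=n} P(H,G)` (the sequence of maxima is
eventually non-increasing, hence the limit exists and equals the `limsup`). -/
noncomputable def inducibility {t : ℕ} (H : SimpleGraph (Fin t)) : ℝ :=
  Filter.limsup (fun n => maxDensity H n) Filter.atTop

/-- The minimal inducibility `i(H) = lim_n min_{|G|=n} P(H,G)` (the sequence of minima is
eventually non-decreasing, hence the limit exists and equals the `liminf`). -/
noncomputable def minInducibility {t : ℕ} (H : SimpleGraph (Fin t)) : ℝ :=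
  Filter.liminf (fun n => minDensity H n) Filter.atTop

/-- The spectral profile: discrete Fourier transform of the labeled profile over the group
of labeled `t`-vertex graphs under symmetric difference of edge sets. -/
noncomputable def spectral {V : Type*} [Fintype V] {t : ℕ}
    (H : SimpleGraph (Fin t)) (G : SimpleGraph V) : ℝ :=
  ∑ H' : SimpleGraph (Fin t),
    (-1 : ℝ) ^ (Nat.card (H ⊓ H').edgeSet) * labDensity H' G

/-- The tensor product `G ⊗ G'`. -/
def tensor {V W : Type*} (G : SimpleGraph V) (G' : SimpleGraph W) : SimpleGraph (V × W) where
  Adj x y := Xor' (G.Adj x.1 y.1) (G'.Adj x.2 y.2)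
  symm := ⟨fun x y h => by
    rcases h with ⟨h1, h2⟩ | ⟨h1, h2⟩
    · exact Or.inl ⟨h1.symm, fun hc => h2 hc.symm⟩
    · exact Or.inr ⟨h1.symm, fun hc => h2 hc.symm⟩⟩
  loopless := ⟨fun x h => by
    rcases h with ⟨h1, _⟩ | ⟨h1, _⟩
    · exact G.loopless.irrefl _ h1
    · exact G'.loopless.irrefl _ h1⟩

/-- The composition (lexicographic product) `G ⊙ G'`. -/
def comp {V W : Type*} (G : SimpleGraph V) (G' : SimpleGraph W) : SimpleGraph (V × W) where
  Adj x y := G.Adj x.1 y.1 ∨ (x.1 = y.1 ∧ G'.Adj x.2 y.2)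
  symm := ⟨fun x y h => by
    rcases h with h | ⟨h1, h2⟩
    · exact Or.inl h.symm
    · exact Or.inr ⟨h1.symm, h2.symm⟩⟩
  loopless := ⟨fun x h => by
    rcases h with h | ⟨_, h2⟩
    · exact G.loopless.irrefl _ h
    · exact G'.loopless.irrefl _ h2⟩

/-- The blow-up of `G` of order `m`. -/
def blowUp {V : Type*} (G : SimpleGraph V) (m : ℕ) : SimpleGraph (V × Fin m) where
  Adj x y := G.Adj x.1 y.1
  symm := ⟨fun _ _ h => G.symm.symm _ _ h⟩
  loopless := ⟨fun _ h => G.loopless.irrefl _ h⟩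

/-- Vertex type of the `n`-fold iterated composition. -/
def iterVert (V : Type) : ℕ → Type
  | 0 => PUnit
  | n + 1 => V × iterVert V n

instance iterVertFintype (V : Type) [Fintype V] : (n : ℕ) → Fintype (iterVert V n)
  | 0 => inferInstanceAs (Fintype PUnit)
  | n + 1 => letI := iterVertFintype V n; inferInstanceAs (Fintype (V × iterVert V n))

/-- The `n`-fold iterated composition `G^{⊙n}` (`n = 0` gives a single vertex). -/
def nestedPow {V : Type} (G : SimpleGraph V) : (n : ℕ) → SimpleGraph (iterVert V n)
  | 0 => (⊥ : SimpleGraph PUnit)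
  | n + 1 => comp G (nestedPow G n)

/- Fixed labeled representatives of the 4-vertex isomorphism types. -/
def K3 : SimpleGraph (Fin 3) := ⊤
def K4 : SimpleGraph (Fin 4) := ⊤
def A4 : SimpleGraph (Fin 4) := ⊥
def P4 : SimpleGraph (Fin 4) := SimpleGraph.pathGraph 4
def C4 : SimpleGraph (Fin 4) := SimpleGraph.cycleGraph 4
def M4 : SimpleGraph (Fin 4) :=
  SimpleGraph.fromRel (fun i j => (i = 0 ∧ j = 1) ∨ (i = 2 ∧ j = 3))
def V4 : SimpleGraph (Fin 4) :=
  SimpleGraph.fromRel (fun i j => (i = 0 ∧ j = 1) ∨ (i = 0 ∧ j = 2))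
def Q4 : SimpleGraph (Fin 4) :=
  SimpleGraph.fromRel (fun i j =>
    (i = 0 ∧ j = 1) ∨ (i = 0 ∧ j = 2) ∨ (i = 1 ∧ j = 2) ∨ (i = 0 ∧ j = 3))
def T4 : SimpleGraph (Fin 4) :=
  SimpleGraph.fromRel (fun i j => (i = 0 ∧ j = 1) ∨ (i = 0 ∧ j = 2) ∨ (i = 1 ∧ j = 2))
def S4 : SimpleGraph (Fin 4) :=
  SimpleGraph.fromRel (fun i j => i = 0 ∧ (j = 1 ∨ j = 2 ∨ j = 3))
def D4 : SimpleGraph (Fin 4) :=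
  SimpleGraph.fromRel (fun i j =>
    (i = 0 ∧ j = 1) ∨ (i = 0 ∧ j = 2) ∨ (i = 0 ∧ j = 3) ∨ (i = 1 ∧ j = 2) ∨ (i = 1 ∧ j = 3))
def E4 : SimpleGraph (Fin 4) :=
  SimpleGraph.fromRel (fun i j => i = 0 ∧ j = 1)

end IndPaper

/-
Blowing up every vertex of `G` into `m` independent copies does not change `R(H, ·)`. On any
graph with `N ≥ t` vertices, `R(H, ·)` and `P(H, ·)` differ by at most the proportion
`1 - N(N-1)⋯(N-t+1)/N^t` of non-injective maps `Fin t → V`, which tends to `0`. So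
`P(H, G^(m)) → R(H, G)` along graphs of size `|V| m → ∞`, and each of these values lies between
the minimum and the maximum of `P(H, ·)` over graphs of that size.
-/

lemma abs_div_sub_div_le_one_sub_div {a r d p : ℝ} (ha : 0 ≤ a) (had : a ≤ d) (hdp : d ≤ p)
    (har : a ≤ r) (hr : r + d ≤ a + p) (hd : 0 < d) : |r / p - a / d| ≤ 1 - d / p := by
  have hp : 0 < p := hd.trans_le hdp
  have hpd : 0 ≤ p - d := sub_nonneg.2 hdp
  rw [abs_sub_le_iff, div_sub_div _ _ hp.ne' hd.ne', div_sub_div _ _ hd.ne' hp.ne',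
    div_le_iff₀ (by positivity), div_le_iff₀ (by positivity), one_sub_div hp.ne',
    div_mul_eq_mul_div, le_div_iff₀ hp, div_mul_eq_mul_div, le_div_iff₀ hp]
  constructor
  · nlinarith [mul_le_mul_of_nonneg_left (mul_le_mul_of_nonneg_left hr hd.le) hp.le,
      mul_nonneg (mul_nonneg ha hpd) hp.le]
  · nlinarith [mul_le_mul_of_nonneg_left (mul_le_mul_of_nonneg_left har hd.le) hp.le,
      mul_le_mul_of_nonneg_left (mul_le_mul_of_nonneg_left had hpd) hp.le]

lemma tendsto_descFactorial_div_pow (t : ℕ) :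
    Tendsto (fun N : ℕ => (N.descFactorial t : ℝ) / (N : ℝ) ^ t) atTop (𝓝 1) := by
  have hlower : Tendsto (fun N : ℕ => (1 - (t : ℝ) / N) ^ t) atTop (𝓝 1) := by
    simpa using ((tendsto_const_div_atTop_nhds_zero_nat (t : ℝ)).const_sub 1).pow t
  refine tendsto_of_tendsto_of_tendsto_of_le_of_le' hlower tendsto_const_nhds ?_
    (Eventually.of_forall fun N => div_le_one_of_le₀ (mod_cast N.descFactorial_le_pow t)
      (by positivity))
  filter_upwards [eventually_gt_atTop t] with N hN
  have hN0 : (0 : ℝ) < N := by exact_mod_cast (Nat.zero_le t).trans_lt hN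
  rw [one_sub_div hN0.ne', div_pow]
  gcongr
  calc ((N : ℝ) - t) ^ t = ((N - t : ℕ) : ℝ) ^ t := by rw [Nat.cast_sub hN.le]
    _ ≤ N.descFactorial t := by
      exact_mod_cast (Nat.pow_le_pow_left (by omega) t).trans (Nat.pow_sub_le_descFactorial N t)

section LimitBounds

variable {ι κ α : Type*} [ConditionallyCompleteLinearOrder α] [TopologicalSpace α]
  [OrderTopology α] [DenselyOrdered α] {f : Filter ι} {g : Filter κ} [g.NeBot]
  {u : ι → α} {v : κ → ι} {a : κ → α} {r : α}

lemma liminf_le_of_tendsto_of_comp_le (hu : f.IsBoundedUnder (· ≥ ·) u)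
    (hv : Tendsto v g f) (ha : Tendsto a g (𝓝 r)) (h : ∀ᶠ m in g, u (v m) ≤ a m) :
    liminf u f ≤ r :=
  le_of_forall_gt_imp_ge_of_dense fun _ hb => liminf_le_of_frequently_le
    (hv.frequently ((h.and (ha.eventually (gt_mem_nhds hb))).mono
      fun _ hm => hm.1.trans hm.2.le).frequently) hu

lemma le_limsup_of_tendsto_of_le_comp (hu : f.IsBoundedUnder (· ≤ ·) u)
    (hv : Tendsto v g f) (ha : Tendsto a g (𝓝 r)) (h : ∀ᶠ m in g, a m ≤ u (v m)) :
    r ≤ limsup u f :=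
  le_of_forall_lt_imp_le_of_dense fun _ hb => le_limsup_of_frequently_le
    (hv.frequently ((h.and (ha.eventually (lt_mem_nhds hb))).mono
      fun _ hm => hm.2.le.trans hm.1).frequently) hu

end LimitBounds

namespace IndPaper

open Finset

section Counting

variable {V : Type*} [Fintype V] {t : ℕ}

noncomputable def pullIsoInduceImage [DecidableEq V] (G : SimpleGraph V) {f : Fin t → V}
    (hf : Function.Injective f) : pull G f ≃g G.induce (↑(univ.image f) : Set V) where
  toEquiv := (Equiv.ofInjective f hf).trans (Equiv.setCongr (by simp))
  map_rel_iff' := Iff.rfl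

lemma card_injective_image_eq [DecidableEq V] {s : Finset V} (hs : s.card = t) :
    #{f : Fin t → V | Function.Injective f ∧ univ.image f = s} = t.factorial := by
  have e : (Fin t ≃ s) ≃ {f : Fin t → V // Function.Injective f ∧ univ.image f = s} :=
    { toFun := fun e => ⟨(↑) ∘ e, Subtype.val_injective.comp e.injective, by
        ext x
        simpa using ⟨by rintro ⟨i, rfl⟩; exact (e i).2, fun hx => ⟨e.symm ⟨x, hx⟩, by simp⟩⟩⟩
      invFun := fun f => Equiv.ofBijective (fun i => ⟨f.1 i, by simp [← f.2.2]⟩)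
        ⟨fun i j h => f.2.1 (congrArg Subtype.val h), by
          rintro ⟨x, hx⟩
          obtain ⟨i, -, rfl⟩ := mem_image.mp (f.2.2.symm ▸ hx)
          exact ⟨i, rfl⟩⟩
      left_inv := fun _ => Equiv.ext fun _ => rfl
      right_inv := fun _ => rfl }
  rw [← Fintype.card_subtype, ← Fintype.card_congr e,
    Fintype.card_equiv (Fintype.equivFinOfCardEq (by simpa using hs)).symm, Fintype.card_fin]

lemma card_injective_filter_image [DecidableEq V] (Q : Finset V → Prop) [DecidablePred Q] :
    #{f : Fin t → V | Function.Injective f ∧ Q (univ.image f)} =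
      #{s : Finset V | s.card = t ∧ Q s} * t.factorial := by
  rw [card_eq_sum_card_fiberwise (f := fun f => univ.image f) (t := {s | s.card = t ∧ Q s})]
  · rw [← smul_eq_mul, ← sum_const]
    refine sum_congr rfl fun s hs => ?_
    rw [mem_filter] at hs
    rw [← card_injective_image_eq hs.2.1, filter_filter]
    congr 1
    ext f
    simp only [mem_filter, mem_univ, true_and]
    constructor
    · exact fun h => ⟨h.1.1, h.2⟩
    · exact fun h => ⟨⟨h.1, h.2 ▸ hs.2.2⟩, h.2⟩
  · intro f hf
    simp only [coe_filter, mem_univ, true_and, Set.mem_ofPred_eq] at hf ⊢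
    exact ⟨(card_image_of_injective _ hf.1).trans (card_fin t), hf.2⟩

lemma card_injective_pull_iso (H : SimpleGraph (Fin t)) (G : SimpleGraph V) :
    Nat.card {f : Fin t → V // Function.Injective f ∧ Nonempty (pull G f ≃g H)} =
      Nat.card {s : Finset V // s.card = t ∧ Nonempty (G.induce (↑s : Set V) ≃g H)} *
        t.factorial := by
  classical
  simp only [Nat.card_eq_fintype_card, Fintype.card_subtype]
  rw [← card_injective_filter_image fun s : Finset V => Nonempty (G.induce (↑s : Set V) ≃g H)]
  refine congrArg card (filter_congr fun f _ => and_congr_right fun hf => ?_)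
  exact ⟨fun ⟨e⟩ => ⟨(pullIsoInduceImage G hf).symm.trans e⟩,
    fun ⟨e⟩ => ⟨(pullIsoInduceImage G hf).trans e⟩⟩

lemma subsetDensity_eq_card_injective_div (H : SimpleGraph (Fin t)) (G : SimpleGraph V) :
    subsetDensity H G =
      Nat.card {f : Fin t → V // Function.Injective f ∧ Nonempty (pull G f ≃g H)} /
        ((Fintype.card V).descFactorial t : ℝ) := by
  rw [card_injective_pull_iso, Nat.descFactorial_eq_factorial_mul_choose, subsetDensity,
    Nat.cast_mul, Nat.cast_mul, mul_comm (t.factorial : ℝ),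
    mul_div_mul_right _ _ (by positivity)]

lemma card_injective_fun [DecidableEq V] :
    #{f : Fin t → V | Function.Injective f} = (Fintype.card V).descFactorial t := by
  rw [← Fintype.card_subtype, Fintype.card_congr (Equiv.subtypeInjectiveEquivEmbedding _ _),
    Fintype.card_embedding_eq, Fintype.card_fin]

lemma card_pull_iso_add_descFactorial_le (H : SimpleGraph (Fin t)) (G : SimpleGraph V) :
    Nat.card {f : Fin t → V // Nonempty (pull G f ≃g H)} + (Fintype.card V).descFactorial t ≤
      Nat.card {f : Fin t → V // Function.Injective f ∧ Nonempty (pull G f ≃g H)} +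
        Fintype.card V ^ t := by
  classical
  simp only [Nat.card_eq_fintype_card, Fintype.card_subtype]
  have hsplit := card_filter_add_card_filter_not
    (s := {f : Fin t → V | Nonempty (pull G f ≃g H)}) Function.Injective
  have hall := card_filter_add_card_filter_not (s := (univ : Finset (Fin t → V)))
    Function.Injective
  have hnoninj : #{f ∈ {f : Fin t → V | Nonempty (pull G f ≃g H)} | ¬ Function.Injective f} ≤
      #{f : Fin t → V | ¬ Function.Injective f} :=
    card_le_card (monotone_filter_left _ (subset_univ _))
  rw [card_univ, Fintype.card_fun, Fintype.card_fin, card_injective_fun] at hall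
  rw [filter_filter] at hsplit
  simp only [and_comm] at hsplit
  omega

lemma abs_repDensity_sub_subsetDensity_le (H : SimpleGraph (Fin t)) (G : SimpleGraph V)
    (ht : t ≤ Fintype.card V) :
    |repDensity H G - subsetDensity H G| ≤
      1 - ((Fintype.card V).descFactorial t : ℝ) / (Fintype.card V : ℝ) ^ t := by
  classical
  have hmono {p q : (Fin t → V) → Prop} (h : ∀ f, p f → q f) :
      Nat.card {f // p f} ≤ Nat.card {f // q f} :=
    Nat.card_mono (Set.toFinite _) h
  have hinj :
      Nat.card {f : Fin t → V // Function.Injective f} = (Fintype.card V).descFactorial t := by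
    rw [Nat.card_eq_fintype_card, Fintype.card_subtype, card_injective_fun]
  rw [repDensity, subsetDensity_eq_card_injective_div]
  refine abs_div_sub_div_le_one_sub_div (by positivity) ?_ ?_ ?_ ?_ ?_
  · exact_mod_cast hinj ▸ hmono fun f (hf : _ ∧ _) => hf.1
  · exact_mod_cast Nat.descFactorial_le_pow _ _
  · exact_mod_cast hmono fun f (hf : _ ∧ _) => hf.2
  · exact_mod_cast card_pull_iso_add_descFactorial_le H G
  · exact_mod_cast Nat.descFactorial_pos.2 ht

end Counting

section Densities

variable {t : ℕ} (H : SimpleGraph (Fin t))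

lemma repDensity_blowUp {V : Type*} [Fintype V] (G : SimpleGraph V) {m : ℕ} (hm : m ≠ 0) :
    repDensity H (blowUp G m) = repDensity H G := by
  have e : {f : Fin t → V × Fin m // Nonempty (pull (blowUp G m) f ≃g H)} ≃
      {g : Fin t → V // Nonempty (pull G g ≃g H)} × (Fin t → Fin m) :=
    { toFun := fun f => (⟨fun i => (f.1 i).1, f.2⟩, fun i => (f.1 i).2)
      invFun := fun p => ⟨fun i => (p.1.1 i, p.2 i), p.1.2⟩
      left_inv := fun _ => rfl
      right_inv := fun _ => rfl }
  rw [repDensity, repDensity, Nat.card_congr e, Nat.card_prod, Nat.card_fun]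
  simp only [Nat.card_fin, Fintype.card_prod, Fintype.card_fin, Nat.cast_mul, Nat.cast_pow]
  rw [mul_pow, mul_div_mul_right _ _ (by positivity)]

lemma subsetDensity_congr {V W : Type*} [Fintype V] [Fintype W] {G : SimpleGraph V}
    {G' : SimpleGraph W} (e : G ≃g G') : subsetDensity H G = subsetDensity H G' := by
  classical
  have hinduce (s : Finset V) :
      G.induce (↑s : Set V) ≃g G'.induce (↑(s.map e.toEquiv.toEmbedding) : Set W) :=
    e.induce (by simpa using e.toEquiv.bijOn_image (s := ↑s))
  have hcount :
      Nat.card {s : Finset V // s.card = t ∧ Nonempty (G.induce (↑s : Set V) ≃g H)} =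
        Nat.card {s : Finset W // s.card = t ∧ Nonempty (G'.induce (↑s : Set W) ≃g H)} :=
    Nat.card_congr <| e.toEquiv.finsetCongr.subtypeEquiv fun s => by
      rw [Equiv.finsetCongr_apply, card_map]
      exact and_congr_right fun _ =>
        ⟨fun ⟨i⟩ => ⟨(hinduce s).symm.trans i⟩, fun ⟨i⟩ => ⟨(hinduce s).trans i⟩⟩
  rw [subsetDensity, subsetDensity, hcount, Fintype.card_congr e.toEquiv]

lemma subsetDensity_nonneg {V : Type*} [Fintype V] (G : SimpleGraph V) :
    0 ≤ subsetDensity H G := by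
  rw [subsetDensity]
  positivity

lemma subsetDensity_le_one {V : Type*} [Fintype V] (G : SimpleGraph V) :
    subsetDensity H G ≤ 1 := by
  classical
  refine div_le_one_of_le₀ ?_ (Nat.cast_nonneg _)
  rw [← Fintype.card_finset_len, ← Nat.card_eq_fintype_card]
  exact_mod_cast Nat.card_mono (Set.toFinite _) fun s (hs : _ ∧ _) => hs.1

lemma minDensity_le_subsetDensity {W : Type*} [Fintype W] (G : SimpleGraph W) :
    minDensity H (Fintype.card W) ≤ subsetDensity H G :=
  subsetDensity_congr H (Iso.map (Fintype.equivFin W) G) ▸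
    csInf_le ⟨0, by rintro _ ⟨G', rfl⟩; exact subsetDensity_nonneg H G'⟩ ⟨_, rfl⟩

lemma subsetDensity_le_maxDensity {W : Type*} [Fintype W] (G : SimpleGraph W) :
    subsetDensity H G ≤ maxDensity H (Fintype.card W) :=
  subsetDensity_congr H (Iso.map (Fintype.equivFin W) G) ▸
    le_csSup ⟨1, by rintro _ ⟨G', rfl⟩; exact subsetDensity_le_one H G'⟩ ⟨_, rfl⟩

lemma minDensity_nonneg (n : ℕ) : 0 ≤ minDensity H n :=
  le_csInf ⟨_, ⊥, rfl⟩ fun _ ⟨G, hG⟩ => hG ▸ subsetDensity_nonneg H G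

lemma maxDensity_le_one (n : ℕ) : maxDensity H n ≤ 1 :=
  csSup_le ⟨_, ⊥, rfl⟩ fun _ ⟨G, hG⟩ => hG ▸ subsetDensity_le_one H G

end Densities

lemma tendsto_card_prod_fin_add_one (V : Type*) [Fintype V] [Nonempty V] :
    Tendsto (fun m => Fintype.card (V × Fin (m + 1))) atTop atTop := by
  refine tendsto_atTop_mono (fun m => ?_) (tendsto_add_atTop_nat 1)
  rw [Fintype.card_prod, Fintype.card_fin]
  exact Nat.le_mul_of_pos_left _ Fintype.card_pos

lemma tendsto_subsetDensity_blowUp {t : ℕ} (H : SimpleGraph (Fin t)) {V : Type*} [Fintype V]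
    [Nonempty V] (G : SimpleGraph V) :
    Tendsto (fun m => subsetDensity H (blowUp G (m + 1))) atTop (𝓝 (repDensity H G)) := by
  have hN := tendsto_card_prod_fin_add_one V
  rw [tendsto_iff_norm_sub_tendsto_zero]
  refine squeeze_zero' (Eventually.of_forall fun _ => norm_nonneg _) ?_
    (by simpa only [sub_self] using ((tendsto_descFactorial_div_pow t).comp hN).const_sub 1)
  filter_upwards [hN.eventually_ge_atTop t] with m hm
  rw [Real.norm_eq_abs, abs_sub_comm, ← repDensity_blowUp H G (Nat.add_one_ne_zero m)]
  exact abs_repDensity_sub_subsetDensity_le H _ hm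

end IndPaper

open IndPaper in
theorem minInducibility_le_repDensity_le_inducibility_general
    {t : ℕ} (H : SimpleGraph (Fin t))
    {V : Type} [Fintype V] [Nonempty V] (G : SimpleGraph V) :
    minInducibility H ≤ repDensity H G ∧ repDensity H G ≤ inducibility H := by
  have hcard := tendsto_card_prod_fin_add_one V
  exact ⟨liminf_le_of_tendsto_of_comp_le
      (isBoundedUnder_of ⟨0, minDensity_nonneg H⟩) hcard (tendsto_subsetDensity_blowUp H G)
      (Eventually.of_forall fun m => minDensity_le_subsetDensity H (blowUp G (m + 1))),
    le_limsup_of_tendsto_of_le_comp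
      (isBoundedUnder_of ⟨1, maxDensity_le_one H⟩) hcard (tendsto_subsetDensity_blowUp H G)
      (Eventually.of_forall fun m => subsetDensity_le_maxDensity H (blowUp G (m + 1)))⟩

open IndPaper in
/-- For every graph `H` on `t ≥ 1` vertices and every finite nonempty graph `G`,
`i(H) ≤ R(H,G) ≤ I(H)`. -/
theorem minInducibility_le_repDensity_le_inducibility
    {t : ℕ} (ht : 1 ≤ t) (H : SimpleGraph (Fin t))
    {V : Type} [Fintype V] [Nonempty V] (G : SimpleGraph V) :
    minInducibility H ≤ repDensity H G ∧ repDensity H G ≤ inducibility H :=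
  minInducibility_le_repDensity_le_inducibility_general H G
end

section
/- For all integers s, t ≥ 2, with m = min(s,t), there exists a bilinear map B : R^{L_m} × R^{L_t} → R^{L_t}, where L_j denotes the (finite) set of labeled graphs on {1,…,j}, such that for every finite simple graph G on exactly s vertices and every finite nonempty simple graph G', the labeled t-profile of the composition satisfies r_t(G ⊙ G') = B(p_m(G), r_t(G')); here r_t and p_m denote the vectors (r(H, G⊙G'))_{H ∈ L_t} and (p(H,G))_{H ∈ L_m}. -/
open Filter Topology SimpleGraph

/-!
A sample `f : Fin t → Fin s × V` of `G ⊙ G'` splits into coordinates `g` and `h`, and the graph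
it sees, `compPull G (pull G' h) g`, depends on `h` only through `pull G' h`. Hence `r(H, G ⊙ G')`
is the sum over `H'` of `r(H', G')` times the proportion of `g : Fin t → Fin s` with
`compPull G H' g = H`.

To express that proportion through `p_m(G)`, factor `g = u ∘ w` with `w : Fin t → Fin m` and
`u : Fin m ↪ Fin s`, which is possible because `g` takes at most `min s t ≤ m` values.
Permutations of `Fin s` act transitively on the embeddings `u`, so the number of factorizations
of `u ∘ w` depends only on `w`. Counting each `g` through its factorizations, weighted by the
inverse of that number, turns the count of `g` into a sum over `w` of counts of embeddings `u`
with prescribed `pull G u`, that is, of values `p(K, G)`; the weights involve neither `G` nor `G'`.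
-/

lemma Function.Embedding.exists_perm_comp_eq {α β : Type*} [Finite α] (u u' : α ↪ β) :
    ∃ σ : Equiv.Perm β, ⇑σ ∘ u = u' := by
  classical
  have : Finite {x | x ∈ Set.range u} := Set.finite_range u
  let e := (Equiv.ofInjective u u.injective).symm.trans (Equiv.ofInjective u' u'.injective)
  refine ⟨e.extendSubtype, funext fun a => ?_⟩
  simp [e, Equiv.extendSubtype_apply_of_mem _ _ (Set.mem_range_self a)]

namespace IndPaper

open Finset Function

section Factorization

variable {ι β : Type*} [Fintype ι] [DecidableEq ι] [Fintype β] [DecidableEq β]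

noncomputable def factorCount (k : ℕ) (g : ι → β) : ℕ :=
  #{p : (ι → Fin k) × (Fin k ↪ β) | ⇑p.2 ∘ p.1 = g}

lemma factorCount_perm_comp (k : ℕ) (σ : Equiv.Perm β) (g : ι → β) :
    factorCount k (σ ∘ g) = factorCount k g := by
  refine card_equiv ((Equiv.refl _).prodCongr ((Equiv.refl _).embeddingCongr σ.symm)) fun p => ?_
  simp [Embedding.congr, Embedding.coe_trans, comp_assoc, Equiv.symm_comp_eq]

lemma factorCount_embedding_comp (k : ℕ) (u u' : Fin k ↪ β) (w : ι → Fin k) :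
    factorCount k (u ∘ w) = factorCount k (u' ∘ w) := by
  obtain ⟨σ, hσ⟩ := Function.Embedding.exists_perm_comp_eq u u'
  rw [← hσ, comp_assoc, factorCount_perm_comp]

lemma factorCount_pos {k : ℕ} (hk : k ≤ Fintype.card β)
    (hιk : min (Fintype.card β) (Fintype.card ι) ≤ k) (g : ι → β) : 0 < factorCount k g := by
  have himage : #(univ.image g) ≤ k :=
    (le_min (card_le_univ _) (card_image_le.trans_eq card_univ)).trans hιk
  obtain ⟨T, hgT, -, hT⟩ := exists_subsuperset_card_eq (subset_univ _) himage (by simpa using hk)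
  let e : T ≃ Fin k := Fintype.equivFinOfCardEq (by rw [Fintype.card_coe, hT])
  refine card_pos.mpr ⟨(fun i => e ⟨g i, hgT (mem_image_of_mem g (mem_univ i))⟩,
    e.symm.toEmbedding.trans (Embedding.subtype _)), ?_⟩
  simp [funext_iff]

lemma sum_eq_sum_factorizations {k : ℕ} (u₀ : Fin k ↪ β)
    (hk : min (Fintype.card β) (Fintype.card ι) ≤ k) (f : (ι → β) → ℝ) :
    ∑ g, f g = ∑ w : ι → Fin k, (∑ u : Fin k ↪ β, f (u ∘ w)) / factorCount k (u₀ ∘ w) := by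
  have hpos := factorCount_pos (by simpa using Fintype.card_le_of_embedding u₀) hk
  have hsurj : univ.image (fun p : (ι → Fin k) × (Fin k ↪ β) => ⇑p.2 ∘ p.1) = univ := by
    refine eq_univ_of_forall fun g => ?_
    obtain ⟨p, hp⟩ := card_pos.mp (hpos g)
    exact mem_image.mpr ⟨p, mem_univ _, (mem_filter.mp hp).2⟩
  calc ∑ g, f g
      = ∑ g, #{p : (ι → Fin k) × (Fin k ↪ β) | ⇑p.2 ∘ p.1 = g} • (f g / factorCount k g) :=
        sum_congr rfl fun g _ => by
          rw [nsmul_eq_mul, ← factorCount]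
          field_simp [(hpos g).ne']
    _ = ∑ p : (ι → Fin k) × (Fin k ↪ β), f (⇑p.2 ∘ p.1) / factorCount k (⇑p.2 ∘ p.1) := by
        rw [sum_comp (fun g => f g / factorCount k g), hsurj]
    _ = _ := by
        rw [Fintype.sum_prod_type]
        simp_rw [sum_div, factorCount_embedding_comp k _ u₀]

end Factorization

section Bilinear

variable {R α β γ : Type*} [CommSemiring R] [Fintype α] [Fintype β]

noncomputable def bilinOfCoeffs (c : γ → α → β → R) : (α → R) →ₗ[R] (β → R) →ₗ[R] (γ → R) :=
  LinearMap.mk₂ R (fun x y l => ∑ i, ∑ j, c l i j * x i * y j)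
    (fun x x' y => by ext; simp [mul_add, add_mul, sum_add_distrib])
    (fun a x y => by ext; simp [mul_sum, mul_assoc, mul_left_comm])
    (fun x y y' => by ext; simp [mul_add, sum_add_distrib])
    (fun a x y => by ext; simp [mul_sum, mul_left_comm])

end Bilinear

section Graphs

open scoped Classical

variable {t : ℕ}

def compPull {W : Type*} (G : SimpleGraph W) (H' : SimpleGraph (Fin t)) (g : Fin t → W) :
    SimpleGraph (Fin t) :=
  pull (comp G H') fun i => (g i, i)

lemma pull_comp {V W : Type*} (G : SimpleGraph W) (G' : SimpleGraph V) (f : Fin t → W × V) :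
    pull (comp G G') f = compPull G (pull G' (Prod.snd ∘ f)) (Prod.fst ∘ f) :=
  rfl

lemma compPull_pull {W : Type*} {k : ℕ} (G : SimpleGraph W) {u : Fin k → W} (hu : Injective u)
    (H' : SimpleGraph (Fin t)) (w : Fin t → Fin k) :
    compPull (pull G u) H' w = compPull G H' (u ∘ w) := by
  ext i j
  simp [compPull, pull, comp, hu.eq_iff]

lemma card_filter_prod_eq_sum {α β γ : Type*} [Fintype α] [Fintype β] [Fintype γ]
    (R : α → γ → Prop) (φ : β → γ) :
    #{p : α × β | R p.1 (φ p.2)} = ∑ c, #{a | R a c} * #{b | φ b = c} := by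
  rw [card_eq_sum_card_fiberwise (f := φ ∘ Prod.snd) (t := univ) fun _ _ => mem_univ _]
  refine sum_congr rfl fun c _ => ?_
  rw [← card_product, filter_filter]
  congr 1
  ext ⟨a, b⟩
  simp only [mem_filter, mem_univ, true_and, mem_product, comp_apply]
  constructor <;> rintro ⟨h, rfl⟩ <;> exact ⟨h, rfl⟩

lemma card_pull_comp_eq_sum {V W : Type*} [Fintype V] [Fintype W] (G : SimpleGraph W)
    (G' : SimpleGraph V) (H : SimpleGraph (Fin t)) :
    Nat.card {f : Fin t → W × V // pull (comp G G') f = H} =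
      ∑ H', #{g | compPull G H' g = H} * #{h : Fin t → V | pull G' h = H'} := by
  rw [Nat.card_eq_fintype_card, Fintype.card_subtype,
    ← card_filter_prod_eq_sum (fun g H' => compPull G H' g = H) (pull G')]
  exact card_equiv (Equiv.arrowProdEquivProdArrow _ _ _) fun f => by
    simp only [mem_filter, mem_univ, true_and]
    rw [pull_comp]
    rfl

lemma labDensity_eq_card_div {V : Type*} [Fintype V] (H : SimpleGraph (Fin t))
    (G : SimpleGraph V) : labDensity H G = #{f | pull G f = H} / (Fintype.card V : ℝ) ^ t := by
  rw [labDensity, Nat.card_eq_fintype_card, Fintype.card_subtype]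

lemma card_embedding_pull_eq {V : Type*} [Fintype V] {k : ℕ} (hk : k ≤ Fintype.card V)
    (G : SimpleGraph V) (K : SimpleGraph (Fin k)) :
    (#{u : Fin k ↪ V | pull G u = K} : ℝ) = injDensity K G * (Fintype.card V).descFactorial k := by
  have hd : ((Fintype.card V).descFactorial k : ℝ) ≠ 0 := by
    exact_mod_cast (Nat.descFactorial_pos.mpr hk).ne'
  rw [injDensity, div_mul_cancel₀ _ hd, ← Fintype.card_subtype, ← Nat.card_eq_fintype_card]
  exact_mod_cast Nat.card_congr <|
    (Equiv.subtypeEquiv (Equiv.subtypeInjectiveEquivEmbedding (Fin k) V).symm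
      fun _ => Iff.rfl).trans (Equiv.subtypeSubtypeEquivSubtypeInter Injective (pull G · = K))

variable {s m : ℕ}

-- By `factorCount_embedding_comp`, any embedding `Fin m ↪ Fin s` could replace
-- `Fin.castLEEmb hms` here.
noncomputable def compCoeff (hms : m ≤ s) (H : SimpleGraph (Fin t)) (K : SimpleGraph (Fin m))
    (H' : SimpleGraph (Fin t)) : ℝ :=
  ∑ w : Fin t → Fin m, if compPull K H' w = H then
    (s.descFactorial m : ℝ) / (factorCount m (Fin.castLEEmb hms ∘ w) * s ^ t) else 0

lemma card_compPull_div_eq_sum (hms : m ≤ s) (hm : min s t ≤ m) (G : SimpleGraph (Fin s))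
    (H H' : SimpleGraph (Fin t)) :
    (#{g | compPull G H' g = H} : ℝ) / s ^ t = ∑ K, compCoeff hms H K H' * injDensity K G := by
  have hfac := sum_eq_sum_factorizations (Fin.castLEEmb hms) (by simpa using hm)
    fun g => if compPull G H' g = H then (1 : ℝ) else 0
  have hfiber : ∀ w : Fin t → Fin m,
      ∑ u : Fin m ↪ Fin s, (if compPull G H' (u ∘ w) = H then (1 : ℝ) else 0) =
        ∑ K, (if compPull K H' w = H then 1 else 0) * (injDensity K G * s.descFactorial m) := by
    intro w
    have hcard : ∀ K, (#{u : Fin m ↪ Fin s | pull G u = K} : ℝ) =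
        injDensity K G * s.descFactorial m := fun K => by
      simpa using card_embedding_pull_eq (by simpa using hms) G K
    simp_rw [← compPull_pull G (Embedding.injective _), ← hcard]
    rw [← Fintype.sum_fiberwise' (fun u : Fin m ↪ Fin s => pull G u)
      fun K => if compPull K H' w = H then (1 : ℝ) else 0]
    simp [Fintype.card_subtype, mul_comm]
  rw [natCast_card_filter, hfac]
  simp_rw [hfiber, compCoeff, sum_div, sum_mul]
  rw [sum_comm]
  refine sum_congr rfl fun K _ => sum_congr rfl fun w _ => ?_
  split_ifs <;> ring

lemma labDensity_comp_eq_sum (hms : m ≤ s) (hm : min s t ≤ m) (G : SimpleGraph (Fin s))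
    {V : Type*} [Fintype V] (G' : SimpleGraph V) (H : SimpleGraph (Fin t)) :
    labDensity H (comp G G') =
      ∑ K, ∑ H', compCoeff hms H K H' * injDensity K G * labDensity H' G' := by
  calc labDensity H (comp G G')
      = ∑ H', (#{g | compPull G H' g = H} : ℝ) / s ^ t * labDensity H' G' := by
        rw [labDensity, card_pull_comp_eq_sum, Fintype.card_prod, Fintype.card_fin]
        push_cast
        rw [mul_pow, sum_div]
        refine sum_congr rfl fun H' _ => ?_
        rw [labDensity_eq_card_div, mul_div_mul_comm]
    _ = _ := by
        simp_rw [card_compPull_div_eq_sum hms hm, sum_mul]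
        exact sum_comm

end Graphs

end IndPaper

open IndPaper in
theorem comp_labDensity_bilinear_general (s t : ℕ) :
    ∃ B : (SimpleGraph (Fin (min s t)) → ℝ) →ₗ[ℝ]
        (SimpleGraph (Fin t) → ℝ) →ₗ[ℝ] (SimpleGraph (Fin t) → ℝ),
      ∀ (G : SimpleGraph (Fin s)) (V : Type) [Fintype V] [Nonempty V]
        (G' : SimpleGraph V),
        (fun H : SimpleGraph (Fin t) => labDensity H (comp G G')) =
          B (fun H : SimpleGraph (Fin (min s t)) => injDensity H G)
            (fun H : SimpleGraph (Fin t) => labDensity H G') := by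
  refine ⟨bilinOfCoeffs (compCoeff (min_le_left s t)), fun G V _ _ G' => ?_⟩
  funext H
  exact labDensity_comp_eq_sum (min_le_left s t) le_rfl G G' H

open IndPaper in
/-- For `s, t ≥ 2`, with `m = min s t`, there is a bilinear map `B` such that for every
graph `G` on exactly `s` vertices and every finite nonempty graph `G'`,
`r_t(G ⊙ G') = B(p_m(G), r_t(G'))`. -/
theorem comp_labDensity_bilinear (s t : ℕ) (hs : 2 ≤ s) (ht : 2 ≤ t) :
    ∃ B : (SimpleGraph (Fin (min s t)) → ℝ) →ₗ[ℝ]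
        (SimpleGraph (Fin t) → ℝ) →ₗ[ℝ] (SimpleGraph (Fin t) → ℝ),
      ∀ (G : SimpleGraph (Fin s)) (V : Type) [Fintype V] [Nonempty V]
        (G' : SimpleGraph V),
        (fun H : SimpleGraph (Fin t) => labDensity H (comp G G')) =
          B (fun H : SimpleGraph (Fin (min s t)) => injDensity H G)
            (fun H : SimpleGraph (Fin t) => labDensity H G') :=
  comp_labDensity_bilinear_general s t
end
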